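/- arXiv:2310.14235 — 3 statements merged into one kernel-verified Lean document; each statement's English description precedes it below -/
import Mathlib

section
/- Let X be a topological space and A, B ⊆ X subsets such that X is the disjoint union of A and B, A is closed in X, and every point of B is closed in X. If A is a sober space and B is Hausdorff in their subspace topologies, then X is sober. -/
/-- A topological space is sober: every irreducible closed subset is the
closure of exactly one point. -/
def IsSoberSpace (X : Type*) [TopologicalSpace X] : Prop :=
  ∀ S : Set X, IsIrreducible S → IsClosed S → ∃! x : X, closure {x} = S

/-!
Sobriety is quasi-sobriety together with T0, and both properties glue along a closed set `A`
and its open complement. An irreducible closed `S ⊆ A` gets its generic point from `A`.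
If `S` meets `Aᶜ`, then `S ∩ Aᶜ` is dense in `S`, so a generic point of `S ∩ Aᶜ` in the
Hausdorff (hence quasi-sober) space `Aᶜ` is a generic point of `S`.
-/

section

open Topology

variable {X : Type*} [TopologicalSpace X]

theorem isSoberSpace_iff_quasiSober_and_t0Space :
    IsSoberSpace X ↔ QuasiSober X ∧ T0Space X := by
  refine ⟨fun h ↦ ⟨⟨fun hS hS' ↦ (h _ hS hS').exists⟩, ?_⟩, fun ⟨_, _⟩ S hS hS' ↦ ?_⟩
  · refine t0Space_iff_inseparable X |>.mpr fun x y hxy ↦ ?_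
    exact (h _ isIrreducible_singleton.closure isClosed_closure).unique rfl
      (inseparable_iff_closure_eq.mp hxy).symm
  · obtain ⟨x, hx⟩ := QuasiSober.sober hS hS'
    exact ⟨x, hx, fun y hy ↦ IsGenericPoint.eq hy hx⟩

theorem IsIrreducible.exists_isGenericPoint_of_subset {S A : Set X}
    (hS : IsIrreducible S) (hS' : IsClosed S) [QuasiSober A] (hSA : S ⊆ A) :
    ∃ x, IsGenericPoint x S := by
  have : QuasiSober S := .of_subset (hS'.preimage continuous_subtype_val) hSA
  have : IrreducibleSpace S := Subtype.irreducibleSpace hS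
  refine ⟨_root_.genericPoint S, ?_⟩
  simpa [hS'.closure_eq] using (_root_.genericPoint_spec S).image continuous_subtype_val

theorem IsIrreducible.exists_isGenericPoint_of_isOpen {S U : Set X}
    (hS : IsIrreducible S) (hS' : IsClosed S) (hU : IsOpen U) [QuasiSober U]
    (hSU : (S ∩ U).Nonempty) : ∃ x, IsGenericPoint x S := by
  have hne : ((↑) ⁻¹' S : Set U).Nonempty := by
    obtain ⟨x, hxS, hxU⟩ := hSU
    exact ⟨⟨x, hxU⟩, hxS⟩
  obtain ⟨x, hx⟩ := QuasiSober.sober (hS.preimage hU.isOpenEmbedding_subtypeVal (by simpa))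
    (hS'.preimage continuous_subtype_val)
  have hx' := hx.image continuous_subtype_val
  rw [closure_image_preimage_of_isPreirreducible _ hU.isOpenMap_subtype_val S hne hS.2 hS'] at hx'
  exact ⟨x, hx'⟩

theorem quasiSober_of_isClosed {A : Set X} (hA : IsClosed A) [QuasiSober A]
    [QuasiSober (Aᶜ : Set X)] : QuasiSober X where
  sober {S} hS hS' := by
    by_cases hSA : (S ∩ Aᶜ).Nonempty
    · exact hS.exists_isGenericPoint_of_isOpen hS' hA.isOpen_compl hSA
    · exact hS.exists_isGenericPoint_of_subset (A := A) hS' fun x hx ↦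
        not_not.mp fun hxA ↦ hSA ⟨x, hx, hxA⟩

theorem eq_of_inseparable_of_mem {s : Set X} [T0Space s] {x y : X} (h : Inseparable x y)
    (hx : x ∈ s) (hy : y ∈ s) : x = y :=
  congrArg Subtype.val <|
    (IsInducing.subtypeVal.inseparable_iff (x := ⟨x, hx⟩) (y := ⟨y, hy⟩)).mp h |>.eq

theorem t0Space_of_isClosed {A : Set X} (hA : IsClosed A) [T0Space A] [T0Space (Aᶜ : Set X)] :
    T0Space X := by
  refine t0Space_iff_inseparable X |>.mpr fun x y h ↦ ?_
  by_cases hx : x ∈ A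
  · exact eq_of_inseparable_of_mem h hx (h.mem_closed_iff hA |>.mp hx)
  · exact eq_of_inseparable_of_mem (s := Aᶜ) h hx (h.mem_open_iff hA.isOpen_compl |>.mp hx)

end

theorem stmt_0_general {X : Type*} [TopologicalSpace X] (A B : Set X)
    (hunion : A ∪ B = Set.univ) (hdisj : Disjoint A B)
    (hAclosed : IsClosed A)
    (hAsober : IsSoberSpace A)
    (hBT2 : T2Space B) :
    IsSoberSpace X := by
  obtain rfl : B = Aᶜ := (IsCompl.of_eq hdisj.eq_bot hunion).compl_eq.symm
  obtain ⟨_, _⟩ := isSoberSpace_iff_quasiSober_and_t0Space.mp hAsober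
  exact isSoberSpace_iff_quasiSober_and_t0Space.mpr
    ⟨quasiSober_of_isClosed hAclosed, t0Space_of_isClosed hAclosed⟩

theorem stmt_0 {X : Type*} [TopologicalSpace X] (A B : Set X)
    (hunion : A ∪ B = Set.univ) (hdisj : Disjoint A B)
    (hAclosed : IsClosed A)
    (hBpts : ∀ x ∈ B, IsClosed ({x} : Set X))
    (hAsober : IsSoberSpace A)
    (hBT2 : T2Space B) :
    IsSoberSpace X :=
  stmt_0_general A B hunion hdisj hAclosed hAsober hBT2
end

section
/- A retract of a homotopy equivalence in the arrow category of topological spaces is a homotopy equivalence. That is, if f : X → Y is a retract of g : A → B (there are maps i : X → A, r : A → X with r∘i = id_X, and j : Y → B, s : B → Y with s∘j = id_Y, such that g∘i = j∘f and f∘r = s∘g), and g is a homotopy equivalence, then f is a homotopy equivalence. -/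
/-- A continuous map is a homotopy equivalence if it has a two-sided homotopy
inverse. -/
def IsHomotopyEquiv {X Y : Type*} [TopologicalSpace X] [TopologicalSpace Y]
    (f : C(X, Y)) : Prop :=
  ∃ g : C(Y, X), (g.comp f).Homotopic (ContinuousMap.id X) ∧
    (f.comp g).Homotopic (ContinuousMap.id Y)

/-!
If `g'` is a homotopy inverse of `g`, then `r ∘ g' ∘ j` is one of `f`: each of the two
composites factors, via one of the commuting squares, as `r ∘ (g' ∘ g) ∘ i` resp.
`s ∘ (g ∘ g') ∘ j`, which is homotopic to `r ∘ i = id` resp. `s ∘ j = id`.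
-/

namespace ContinuousMap

variable {X Y A B : Type*} [TopologicalSpace X] [TopologicalSpace Y]
  [TopologicalSpace A] [TopologicalSpace B]

theorem Homotopic.comp_comp_of_homotopic_id {u : C(A, A)}
    (hu : u.Homotopic (ContinuousMap.id A)) (a : C(A, Y)) (b : C(X, A)) :
    (a.comp (u.comp b)).Homotopic (a.comp b) :=
  (Homotopic.refl a).comp (hu.comp (Homotopic.refl b))

theorem leftHomotopyInverse_of_retract {f : C(X, Y)} {g : C(A, B)} {g' : C(B, A)}
    {i : C(X, A)} {r : C(A, X)} {j : C(Y, B)}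
    (hri : r.comp i = ContinuousMap.id X) (hsq : g.comp i = j.comp f)
    (hg : (g'.comp g).Homotopic (ContinuousMap.id A)) :
    ((r.comp (g'.comp j)).comp f).Homotopic (ContinuousMap.id X) := by
  have hfactor : (r.comp (g'.comp j)).comp f = r.comp ((g'.comp g).comp i) := by
    simp only [comp_assoc, hsq]
  rw [hfactor, ← hri]
  exact hg.comp_comp_of_homotopic_id r i

theorem rightHomotopyInverse_of_retract {f : C(X, Y)} {g : C(A, B)} {g' : C(B, A)}
    {r : C(A, X)} {j : C(Y, B)} {s : C(B, Y)}
    (hsj : s.comp j = ContinuousMap.id Y) (hsq : f.comp r = s.comp g)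
    (hg : (g.comp g').Homotopic (ContinuousMap.id B)) :
    (f.comp (r.comp (g'.comp j))).Homotopic (ContinuousMap.id Y) := by
  have hfactor : f.comp (r.comp (g'.comp j)) = s.comp ((g.comp g').comp j) := by
    simp only [← comp_assoc, hsq]
  rw [hfactor, ← hsj]
  exact hg.comp_comp_of_homotopic_id s j

end ContinuousMap

theorem stmt_10 {X Y A B : Type*} [TopologicalSpace X] [TopologicalSpace Y]
    [TopologicalSpace A] [TopologicalSpace B]
    (f : C(X, Y)) (g : C(A, B))
    (i : C(X, A)) (r : C(A, X)) (j : C(Y, B)) (s : C(B, Y))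
    (hri : r.comp i = ContinuousMap.id X)
    (hsj : s.comp j = ContinuousMap.id Y)
    (hsq1 : g.comp i = j.comp f)
    (hsq2 : f.comp r = s.comp g)
    (hg : IsHomotopyEquiv g) :
    IsHomotopyEquiv f := by
  obtain ⟨g', hg'g, hgg'⟩ := hg
  exact ⟨r.comp (g'.comp j),
    ContinuousMap.leftHomotopyInverse_of_retract hri hsq1 hg'g,
    ContinuousMap.rightHomotopyInverse_of_retract hsj hsq2 hgg'⟩
end

section
/- Let k₀ : L → L be a prenucleus on a frame L, i.e., an order-preserving map with x ≤ k₀(x) and k₀(x) ⊓ y ≤ k₀(x ⊓ y) for all x, y. Define k(x) = ⨅ { y ∈ Fix(k₀) : x ≤ y }, where Fix(k₀) is the set of fixed points of k₀. Then k is a nucleus on L: k is a closure operator (monotone, inflationary, idempotent) that preserves binary meets, and Fix(k) = Fix(k₀). -/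
/-!
`genNucleus k₀ x` is the least fixed point of `k₀` above `x`, since the fixed points of a monotone
inflationary map are closed under arbitrary meets. The prenucleus inequality makes them closed
under `a ⇨ -` as well, and this is what turns the closure operator `genNucleus k₀` into a nucleus:
if `c` is fixed and `x ⊓ y ≤ c`, then `x ≤ y ⇨ c` gives `genNucleus k₀ x ≤ y ⇨ c`, i.e.
`y ≤ genNucleus k₀ x ⇨ c`, whence `genNucleus k₀ y ≤ genNucleus k₀ x ⇨ c`.
-/

variable {L : Type*} [Order.Frame L]

/-- The nucleus generated by a prenucleus `k₀`: the meet of all fixed points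
of `k₀` above a given element. -/
def genNucleus (k₀ : L → L) (x : L) : L :=
  sInf {y : L | k₀ y = y ∧ x ≤ y}

theorem Function.IsFixedPt.himp {H : Type*} [HeytingAlgebra H] {k₀ : H → H}
    (hmono : Monotone k₀) (hinfl : ∀ x, x ≤ k₀ x) (hpre : ∀ x y, k₀ x ⊓ y ≤ k₀ (x ⊓ y)) {c : H}
    (hc : Function.IsFixedPt k₀ c) (a : H) : Function.IsFixedPt k₀ (a ⇨ c) := by
  refine le_antisymm (le_himp_iff.2 ?_) (hinfl _)
  calc k₀ (a ⇨ c) ⊓ a ≤ k₀ ((a ⇨ c) ⊓ a) := hpre _ _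
    _ ≤ k₀ c := hmono himp_inf_le
    _ = c := hc

namespace genNucleus

variable {k₀ : L → L}

theorem le_self (x : L) : x ≤ genNucleus k₀ x :=
  le_sInf fun _ hy => hy.2

theorem le_of_isFixedPt {x y : L} (hy : k₀ y = y) (hxy : x ≤ y) : genNucleus k₀ x ≤ y :=
  sInf_le ⟨hy, hxy⟩

theorem monotone : Monotone (genNucleus k₀) := fun _ _ hab =>
  le_sInf fun _ hy => le_of_isFixedPt hy.1 (hab.trans hy.2)

theorem isFixedPt (hmono : Monotone k₀) (hinfl : ∀ x, x ≤ k₀ x) (x : L) :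
    k₀ (genNucleus k₀ x) = genNucleus k₀ x :=
  le_antisymm (le_sInf fun _ hy => (hmono (sInf_le hy)).trans_eq hy.1) (hinfl _)

theorem idem (hmono : Monotone k₀) (hinfl : ∀ x, x ≤ k₀ x) (x : L) :
    genNucleus k₀ (genNucleus k₀ x) = genNucleus k₀ x :=
  le_antisymm (le_of_isFixedPt (isFixedPt hmono hinfl x) le_rfl) (le_self _)

theorem eq_self_iff (hmono : Monotone k₀) (hinfl : ∀ x, x ≤ k₀ x) (x : L) :
    genNucleus k₀ x = x ↔ k₀ x = x :=
  ⟨fun h => h ▸ isFixedPt hmono hinfl x, fun h =>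
    le_antisymm (le_of_isFixedPt h le_rfl) (le_self x)⟩

theorem map_inf (hmono : Monotone k₀) (hinfl : ∀ x, x ≤ k₀ x)
    (hpre : ∀ x y, k₀ x ⊓ y ≤ k₀ (x ⊓ y)) (x y : L) :
    genNucleus k₀ (x ⊓ y) = genNucleus k₀ x ⊓ genNucleus k₀ y := by
  refine le_antisymm (le_inf (monotone inf_le_left) (monotone inf_le_right)) (le_sInf ?_)
  rintro c ⟨hc, hxy⟩
  have himp_fixed (a : L) : k₀ (a ⇨ c) = a ⇨ c :=
    Function.IsFixedPt.himp hmono hinfl hpre hc a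
  have hx : genNucleus k₀ x ≤ y ⇨ c := le_of_isFixedPt (himp_fixed y) (le_himp_iff.2 hxy)
  have hy : genNucleus k₀ y ≤ genNucleus k₀ x ⇨ c :=
    le_of_isFixedPt (himp_fixed _) (le_himp_comm.1 hx)
  exact le_himp_iff'.1 hy

end genNucleus

theorem stmt_18 (k₀ : L → L) (hmono : Monotone k₀)
    (hinfl : ∀ x, x ≤ k₀ x)
    (hpre : ∀ x y, k₀ x ⊓ y ≤ k₀ (x ⊓ y)) :
    Monotone (genNucleus k₀) ∧
    (∀ x, x ≤ genNucleus k₀ x) ∧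
    (∀ x, genNucleus k₀ (genNucleus k₀ x) = genNucleus k₀ x) ∧
    (∀ x y, genNucleus k₀ (x ⊓ y) = genNucleus k₀ x ⊓ genNucleus k₀ y) ∧
    (∀ x, k₀ x = x ↔ genNucleus k₀ x = x) :=
  ⟨genNucleus.monotone, genNucleus.le_self, genNucleus.idem hmono hinfl,
    genNucleus.map_inf hmono hinfl hpre, fun x => (genNucleus.eq_self_iff hmono hinfl x).symm⟩
end
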